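/- Let M be a compact smooth manifold. Then every maximal ideal of the algebra C^∞(M,ℂ) is of the form I_x = {f ∈ C^∞(M,ℂ) | f(x) = 0} for a unique point x ∈ M, and conversely each I_x is a maximal ideal. -/

import Mathlib

open Bundle Manifold
open scoped TensorProduct

local notation "∞" => (⊤ : ℕ∞)

noncomputable section

/-- Complex multiplication and addition are smooth over `ℝ`, so that the complex-valued smooth
functions on a real manifold form a (comm)ring. -/
instance : ContMDiffRing 𝓘(ℝ, ℂ) (⊤ : ℕ∞) ℂ where
  contMDiff_add := by
    rw [contMDiff_iff]
    refine ⟨continuous_add, fun x y => ?_⟩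
    simp only [mfld_simps]
    exact contDiff_add.contDiffOn
  contMDiff_mul := by
    rw [contMDiff_iff]
    refine ⟨continuous_mul, fun x y => ?_⟩
    simp only [mfld_simps]
    exact contDiff_mul.contDiffOn

variable {EM : Type*} [NormedAddCommGroup EM] [NormedSpace ℝ EM] [FiniteDimensional ℝ EM]
  {HM : Type*} [TopologicalSpace HM] {IM : ModelWithCorners ℝ EM HM}
  {M : Type*} [TopologicalSpace M] [ChartedSpace HM M] [IsManifold IM (⊤ : ℕ∞) M]
  [T2Space M] [SecondCountableTopology M] [CompactSpace M]

/-- The constant functions make the smooth complex-valued functions a `ℂ`-algebra. -/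
instance : Algebra ℂ C^∞⟮IM, M; 𝓘(ℝ, ℂ), ℂ⟯ :=
  RingHom.toAlgebra
    { toFun := fun c => ⟨fun _ => c, contMDiff_const⟩
      map_one' := rfl
      map_mul' := fun _ _ => rfl
      map_zero' := rfl
      map_add' := fun _ _ => rfl }

/-- `I_x`, the ideal of smooth complex-valued functions vanishing at the point `x`. -/
def SmoothMap.idealOfPoint (x : M) : Ideal C^∞⟮IM, M; 𝓘(ℝ, ℂ), ℂ⟯ :=
  RingHom.ker (ContMDiffMap.evalRingHom x : C^∞⟮IM, M; 𝓘(ℝ, ℂ), ℂ⟯ →+* ℂ)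

/-!
A proper ideal `J` has a common zero: otherwise compactness gives finitely many `fᵢ ∈ J` without
common zero, and `∑ conj fᵢ * fᵢ = ∑ |fᵢ|²` is a nowhere vanishing element of `J`, hence a unit.
So a maximal ideal lies in, hence equals, some `I_x`, and `x` is unique because smooth Urysohn
functions separate points.
-/

section

variable {E : Type*} [NormedAddCommGroup E] [NormedSpace ℝ E] {H : Type*} [TopologicalSpace H]
  {I : ModelWithCorners ℝ E H} {N : Type*} [TopologicalSpace N] [ChartedSpace H N]

namespace ContMDiffMap

def conj (f : C^∞⟮I, N; 𝓘(ℝ, ℂ), ℂ⟯) : C^∞⟮I, N; 𝓘(ℝ, ℂ), ℂ⟯ :=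
  ⟨fun m => starRingEnd ℂ (f m), Complex.conjCLE.contDiff.contMDiff.comp f.contMDiff⟩

theorem conj_mul_self_apply (f : C^∞⟮I, N; 𝓘(ℝ, ℂ), ℂ⟯) (m : N) :
    (conj f * f) m = Complex.normSq (f m) := by
  rw [Complex.normSq_eq_conj_mul_self]
  rfl

theorem isUnit_of_forall_ne_zero {g : C^∞⟮I, N; 𝓘(ℝ, ℂ), ℂ⟯} (hg : ∀ m, g m ≠ 0) : IsUnit g :=
  IsUnit.of_mul_eq_one
    ⟨fun m => (g m)⁻¹, fun m => (contDiffAt_inv ℝ (hg m)).contMDiffAt.comp m (g.contMDiff m)⟩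
    (ext fun m => mul_inv_cancel₀ (hg m))

theorem isUnit_sum_conj_mul_self {ι : Type*} (t : Finset ι) (f : ι → C^∞⟮I, N; 𝓘(ℝ, ℂ), ℂ⟯)
    (hf : ∀ m, ∃ i ∈ t, f i m ≠ 0) : IsUnit (∑ i ∈ t, conj (f i) * f i) := by
  refine isUnit_of_forall_ne_zero fun m => ?_
  obtain ⟨i, hit, hfi⟩ := hf m
  have hsum_pos : 0 < ∑ j ∈ t, Complex.normSq (f j m) :=
    Finset.sum_pos' (fun j _ => Complex.normSq_nonneg _) ⟨i, hit, Complex.normSq_pos.2 hfi⟩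
  have hsum_apply :
      (∑ j ∈ t, conj (f j) * f j) m = ((∑ j ∈ t, Complex.normSq (f j m) : ℝ) : ℂ) := by
    rw [← coeFnRingHom_apply, map_sum, Finset.sum_apply, Complex.ofReal_sum]
    exact Finset.sum_congr rfl fun j _ => conj_mul_self_apply (f j) m
  rw [hsum_apply]
  exact_mod_cast hsum_pos.ne'

theorem exists_forall_mem_ideal_eq_zero [CompactSpace N] {J : Ideal C^∞⟮I, N; 𝓘(ℝ, ℂ), ℂ⟯}
    (hJ : J ≠ ⊤) : ∃ x : N, ∀ f ∈ J, f x = 0 := by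
  by_contra! h
  choose f hfJ hfx using h
  obtain ⟨t, ht⟩ := isCompact_univ.elim_finite_subcover (fun x : N => {m | f x m ≠ 0})
    (fun x => isOpen_compl_singleton.preimage (map_continuous (f x)))
    (fun m _ => Set.mem_iUnion.2 ⟨m, hfx m⟩)
  have hcover : ∀ m, ∃ x ∈ t, f x m ≠ 0 := fun m => by
    simpa using ht (Set.mem_univ m)
  have hmem : ∑ x ∈ t, conj (f x) * f x ∈ J :=
    Ideal.sum_mem _ fun x _ => J.mul_mem_left _ (hfJ x)
  exact hJ (J.eq_top_of_isUnit_mem hmem (isUnit_sum_conj_mul_self t f hcover))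

end ContMDiffMap

namespace SmoothMap

theorem mem_idealOfPoint {x : N} {f : C^∞⟮I, N; 𝓘(ℝ, ℂ), ℂ⟯} :
    f ∈ idealOfPoint x ↔ f x = 0 :=
  Iff.rfl

theorem idealOfPoint_isMaximal (x : N) : (idealOfPoint (IM := I) x).IsMaximal :=
  RingHom.ker_isMaximal_of_surjective _ fun c => ⟨⟨fun _ => c, contMDiff_const⟩, rfl⟩

theorem idealOfPoint_injective [FiniteDimensional ℝ E] [IsManifold I ∞ N] [T2Space N]
    [SigmaCompactSpace N] : Function.Injective (idealOfPoint (IM := I) (M := N)) := by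
  intro x y hxy
  by_contra hne
  obtain ⟨f, hfx, hfy, -⟩ := exists_contMDiffMap_zero_one_of_isClosed I (n := ∞)
    (isClosed_singleton (x := x)) (isClosed_singleton (x := y)) (Set.disjoint_singleton.2 hne)
  let F : C^∞⟮I, N; 𝓘(ℝ, ℂ), ℂ⟯ :=
    ⟨fun m => (f m : ℂ), Complex.ofRealCLM.contDiff.contMDiff.comp f.contMDiff⟩
  have hFx : F ∈ idealOfPoint x := mem_idealOfPoint.2 (Complex.ofReal_eq_zero.2 (hfx rfl))
  have hFy : F ∉ idealOfPoint y := fun h =>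
    zero_ne_one ((Complex.ofReal_eq_zero.1 h).symm.trans (hfy rfl))
  exact hFy (hxy ▸ hFx)

end SmoothMap

end

theorem maximal_ideals_eq_idealOfPoint :
    (∀ J : Ideal C^∞⟮IM, M; 𝓘(ℝ, ℂ), ℂ⟯, J.IsMaximal →
      ∃! x : M, J = SmoothMap.idealOfPoint (IM := IM) x) ∧
    (∀ x : M, (SmoothMap.idealOfPoint (IM := IM) x).IsMaximal) := by
  refine ⟨fun J hJ => ?_, SmoothMap.idealOfPoint_isMaximal⟩
  obtain ⟨x, hx⟩ := ContMDiffMap.exists_forall_mem_ideal_eq_zero hJ.ne_top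
  have hJx : J = SmoothMap.idealOfPoint x :=
    hJ.eq_of_le (SmoothMap.idealOfPoint_isMaximal x).ne_top hx
  exact ⟨x, hJx, fun y hy => SmoothMap.idealOfPoint_injective (hy.symm.trans hJx)⟩

end
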